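/- For every n ∈ ℕ, the q-Volkenborn integral of the Gaussian binomial coefficient is ∫_{ℤ_p} binom(x,n)_q dμ_q(x) = (−1)^n q^{n−C(n+1,2)} / [n+1]_q; precisely, the sequence N ↦ (1/[p^N]_q) Σ_{x=0}^{p^N−1} q^x binom(x,n)_q converges in ℚ_p to (−1)^n q^n q^{−C(n+1,2)} / [n+1]_q as N → ∞. (Equation (13), with the exponent of q corrected so that the case n = 1 gives ∫ [x]_q dμ_q = −1/[2]_q.) -/

import Mathlib

/-!
For `‖q - 1‖ ^ (p - 1) < p⁻¹` the binomial expansion of `(1 + (q - 1)) ^ m` gives the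
lifting-the-exponent formula `‖q ^ m - 1‖ = ‖m‖ * ‖q - 1‖`, i.e. `‖[m]_q‖ = ‖m‖`: no `[m]_q` with
`m ≠ 0` vanishes, and `[p ^ N]_q → 0`.

The q-hockey-stick identity `∑_{x < M} q^x binom(x, n)_q = q^n binom(M, n + 1)_q` and absorption
`[n + 1]_q binom(M, n + 1)_q = [M]_q binom(M - 1, n)_q` turn the Riemann sum into
`q^n binom(M - 1, n)_q / [n + 1]_q`. Since `q^(j+1) [M - 1 - j]_q = [M]_q - [j + 1]_q`, the factor
`binom(M - 1, n)_q` is a polynomial in `[M]_q`, whose value at `0` is `(-1)^n q^(-C(n + 1, 2))`.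
-/

/-- The q-analogue `[n]_q = (1 - q^n)/(1 - q)` of a natural number. -/
def qnum {K : Type*} [Field K] (q : K) (n : ℕ) : K := (1 - q ^ n) / (1 - q)

/-- The q-factorial `[n]_q! = ∏_{j=1}^n [j]_q`. -/
def qfact {K : Type*} [Field K] (q : K) (n : ℕ) : K :=
  ∏ j ∈ Finset.range n, qnum q (j + 1)

/-- The Gaussian binomial coefficient, `0` for `k > n`. -/
def qbinom {K : Type*} [Field K] (q : K) (n k : ℕ) : K :=
  if k ≤ n then qfact q n / (qfact q k * qfact q (n - k)) else 0

open Finset Filter Topology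

lemma norm_sum_lt_of_forall_lt {R ι : Type*} [SeminormedAddCommGroup R] [IsUltrametricDist R]
    {s : Finset ι} {f : ι → R} {C : ℝ} (hC : 0 < C) (h : ∀ i ∈ s, ‖f i‖ < C) :
    ‖∑ i ∈ s, f i‖ < C := by
  rcases s.eq_empty_or_nonempty with rfl | hs
  · simpa using hC
  · exact (hs.norm_sum_le_sup'_norm f).trans_lt ((Finset.sup'_lt_iff hs).2 h)

lemma one_add_pow_sub_one {R : Type*} [CommRing R] (t : R) (m : ℕ) :
    (1 + t) ^ m - 1 = m * t + ∑ k ∈ Ico 2 (m + 1), t ^ k * m.choose k := by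
  rcases m.eq_zero_or_pos with rfl | hm
  · simp
  rw [add_comm 1 t, add_pow, range_eq_Ico, sum_eq_sum_Ico_succ_bot (by omega),
    sum_eq_sum_Ico_succ_bot (by omega)]
  simp [mul_comm]

lemma norm_one_add_pow_sub_one {R : Type*} [NormedCommRing R] [IsUltrametricDist R] {t : R}
    {m : ℕ} (hmt : (m : R) * t ≠ 0)
    (h : ∀ k ∈ Ico 2 (m + 1), ‖t ^ k * m.choose k‖ < ‖(m : R) * t‖) :
    ‖(1 + t) ^ m - 1‖ = ‖(m : R) * t‖ := by
  have hlt := norm_sum_lt_of_forall_lt (norm_pos_iff.2 hmt) h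
  rw [one_add_pow_sub_one, IsUltrametricDist.norm_add_eq_max_of_norm_ne_norm hlt.ne',
    max_eq_left hlt.le]

lemma pow_pred_lt_inv_of_lt_rpow {a : ℝ} {p : ℕ} (hp : 1 < p) (ha : 0 ≤ a)
    (h : a < (p : ℝ) ^ (-(1 : ℝ) / ((p : ℝ) - 1))) : a ^ (p - 1) < (p : ℝ)⁻¹ := by
  have hp' : (1 : ℝ) < p := by exact_mod_cast hp
  calc a ^ (p - 1) < ((p : ℝ) ^ (-(1 : ℝ) / ((p : ℝ) - 1))) ^ (p - 1) :=
        pow_lt_pow_left₀ h ha (by omega)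
    _ = (p : ℝ)⁻¹ := by
        rw [← Real.rpow_natCast, ← Real.rpow_mul (by positivity), Nat.cast_sub hp.le,
          Nat.cast_one, div_mul_cancel₀ _ (by linarith), Real.rpow_neg_one]

namespace PadicInt
variable {p : ℕ} [Fact p.Prime] {x : ℤ_[p]}

lemma norm_sub_one_lt_one (hx : ‖x - 1‖ ^ (p - 1) < (p : ℝ)⁻¹) : ‖x - 1‖ < 1 := by
  have hp := (Fact.out : p.Prime).one_lt
  refine (pow_lt_one_iff_of_nonneg (norm_nonneg _) (by omega)).1 (hx.trans ?_)
  exact inv_lt_one_of_one_lt₀ (by exact_mod_cast hp)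

lemma norm_pow_sub_one_of_coprime (hx : ‖x - 1‖ < 1) {m : ℕ} (hm : p.Coprime m) :
    ‖x ^ m - 1‖ = ‖x - 1‖ := by
  rcases eq_or_ne x 1 with rfl | hx1
  · simp
  have ht : 0 < ‖x - 1‖ := norm_pos_iff.2 (sub_ne_zero.2 hx1)
  have hmt : ‖(m : ℤ_[p]) * (x - 1)‖ = ‖x - 1‖ := by
    rw [norm_mul, norm_natCast_eq_one_iff.2 hm, one_mul]
  have key := norm_one_add_pow_sub_one (t := x - 1) (m := m)
    (norm_ne_zero_iff.1 (hmt ▸ ht.ne')) fun k hk => ?_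
  · rwa [add_sub_cancel, hmt] at key
  rw [hmt]
  calc ‖(x - 1) ^ k * m.choose k‖ ≤ ‖x - 1‖ ^ k := by
        rw [norm_mul, norm_pow]
        exact mul_le_of_le_one_right (by positivity) (norm_le_one _)
    _ < ‖x - 1‖ := pow_lt_self_of_lt_one₀ ht hx (mem_Ico.1 hk).1

lemma norm_pow_prime_sub_one (hx : ‖x - 1‖ ^ (p - 1) < (p : ℝ)⁻¹) :
    ‖x ^ p - 1‖ = (p : ℝ)⁻¹ * ‖x - 1‖ := by
  rcases eq_or_ne x 1 with rfl | hx1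
  · simp
  have hp := (Fact.out : p.Prime)
  have ht : 0 < ‖x - 1‖ := norm_pos_iff.2 (sub_ne_zero.2 hx1)
  have ht1 := norm_sub_one_lt_one hx
  have hpt : ‖(p : ℤ_[p]) * (x - 1)‖ = (p : ℝ)⁻¹ * ‖x - 1‖ := by rw [norm_mul, norm_p]
  have key := norm_one_add_pow_sub_one (t := x - 1) (m := p) ?_ fun k hk => ?_
  · rwa [add_sub_cancel, hpt] at key
  · exact mul_ne_zero (Nat.cast_ne_zero.2 hp.ne_zero) (sub_ne_zero.2 hx1)
  rw [hpt]
  obtain ⟨hk2, hkp⟩ := mem_Ico.1 hk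
  rcases (Nat.lt_succ_iff.1 hkp).lt_or_eq with hkp | rfl
  · obtain ⟨c, hc⟩ := hp.dvd_choose_self (by omega) hkp
    have hp0 : (0 : ℝ) < (p : ℝ)⁻¹ := by simp [hp.pos]
    calc ‖(x - 1) ^ k * p.choose k‖ ≤ ‖x - 1‖ ^ k * (p : ℝ)⁻¹ := by
          rw [hc, norm_mul, norm_pow, Nat.cast_mul, norm_mul, norm_p]
          exact mul_le_mul_of_nonneg_left (mul_le_of_le_one_right hp0.le (norm_le_one _))
            (by positivity)
      _ < ‖x - 1‖ * (p : ℝ)⁻¹ :=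
          mul_lt_mul_of_pos_right (pow_lt_self_of_lt_one₀ ht ht1 (by omega)) hp0
      _ = (p : ℝ)⁻¹ * ‖x - 1‖ := mul_comm _ _
  · have : (x - 1) ^ k = (x - 1) ^ (k - 1) * (x - 1) := by
      rw [← pow_succ, Nat.sub_add_cancel hp.one_le]
    rw [Nat.choose_self, Nat.cast_one, mul_one, this, norm_mul, norm_pow]
    exact mul_lt_mul_of_pos_right hx ht

theorem norm_pow_sub_one (hx : ‖x - 1‖ ^ (p - 1) < (p : ℝ)⁻¹) (m : ℕ) :
    ‖x ^ m - 1‖ = ‖(m : ℤ_[p])‖ * ‖x - 1‖ := by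
  have hp := (Fact.out : p.Prime)
  induction m using Nat.strong_induction_on with
  | _ m ih =>
  by_cases hpm : p ∣ m
  · obtain ⟨k, rfl⟩ := hpm
    rcases k.eq_zero_or_pos with rfl | hk
    · simp
    have ihk := ih k (lt_mul_left hk hp.one_lt)
    have hxk : ‖x ^ k - 1‖ ≤ ‖x - 1‖ := by
      rw [ihk]; exact mul_le_of_le_one_left (norm_nonneg _) (norm_le_one _)
    rw [pow_mul', norm_pow_prime_sub_one ((pow_le_pow_left₀ (norm_nonneg _) hxk _).trans_lt hx),
      ihk, Nat.cast_mul, norm_mul, norm_p, mul_assoc]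
  · have hcop := hp.coprime_iff_not_dvd.2 hpm
    rw [norm_pow_sub_one_of_coprime (norm_sub_one_lt_one hx) hcop,
      norm_natCast_eq_one_iff.2 hcop, one_mul]

theorem norm_qnum (hx1 : x ≠ 1) (hx : ‖x - 1‖ ^ (p - 1) < (p : ℝ)⁻¹) (m : ℕ) :
    ‖qnum (x : ℚ_[p]) m‖ = ‖(m : ℚ_[p])‖ := by
  have hcoe (y : ℤ_[p]) : ‖1 - (y : ℚ_[p])‖ = ‖y - 1‖ := by
    rw [norm_sub_rev, ← padic_norm_e_of_padicInt, coe_sub, coe_one]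
  rw [qnum, norm_div, ← coe_pow, hcoe, hcoe, norm_pow_sub_one hx,
    mul_div_cancel_right₀ _ (norm_ne_zero_iff.2 (sub_ne_zero.2 hx1)), ← padic_norm_e_of_padicInt,
    coe_natCast]

end PadicInt

section QAnalogues
variable {K : Type*} [Field K] {q : K}

lemma qnum_add (a b : ℕ) : qnum q (a + b) = qnum q a + q ^ a * qnum q b := by
  simp only [qnum, pow_add]
  ring

lemma qfact_zero : qfact q 0 = 1 :=
  prod_range_zero _

lemma qfact_succ (m : ℕ) : qfact q (m + 1) = qfact q m * qnum q (m + 1) :=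
  prod_range_succ _ _

lemma qbinom_of_lt {m k : ℕ} (h : m < k) : qbinom q m k = 0 :=
  if_neg h.not_ge

lemma prod_range_neg_inv_pow_succ (n : ℕ) :
    ∏ j ∈ range n, -(q ^ (j + 1))⁻¹ = (-1) ^ n * (q ^ (n + 1).choose 2)⁻¹ := by
  have hsum : ∑ j ∈ range n, (j + 1) = (n + 1).choose 2 := by
    rw [Nat.choose_two_right, ← sum_range_id, sum_range_succ']
    rfl
  rw [prod_neg, card_range, prod_inv_distrib, prod_pow_eq_pow_sum, hsum]

variable (hq : ∀ m ≠ 0, qnum q m ≠ 0)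
include hq

lemma qfact_ne_zero (m : ℕ) : qfact q m ≠ 0 :=
  prod_ne_zero_iff.2 fun j _ => hq _ j.succ_ne_zero

lemma qbinom_zero_right (m : ℕ) : qbinom q m 0 = 1 := by
  simp [qbinom, qfact_zero, qfact_ne_zero hq m]

lemma qnum_mul_qbinom_succ_succ (m k : ℕ) :
    qnum q (k + 1) * qbinom q (m + 1) (k + 1) = qnum q (m + 1) * qbinom q m k := by
  rcases lt_or_ge m k with h | h
  · rw [qbinom_of_lt (by omega), qbinom_of_lt h, mul_zero, mul_zero]
  have := qfact_ne_zero hq k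
  have := qfact_ne_zero hq (m - k)
  have := hq (k + 1) k.succ_ne_zero
  rw [qbinom, qbinom, if_pos (by omega), if_pos h, Nat.succ_sub_succ, qfact_succ, qfact_succ]
  field_simp

lemma qnum_mul_qbinom_succ_right (m k : ℕ) :
    qnum q (k + 1) * qbinom q m (k + 1) = qnum q (m - k) * qbinom q m k := by
  rcases lt_or_ge m (k + 1) with h | h
  · rcases (Nat.lt_succ_iff.1 h).lt_or_eq with h' | rfl
    · rw [qbinom_of_lt h, qbinom_of_lt h', mul_zero, mul_zero]
    · simp [qbinom_of_lt h, qnum]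
  have := qfact_ne_zero hq k
  have := qfact_ne_zero hq (m - (k + 1))
  have := hq (k + 1) k.succ_ne_zero
  have := hq (m - (k + 1) + 1) (Nat.succ_ne_zero _)
  rw [qbinom, qbinom, if_pos h, if_pos (by omega), qfact_succ,
    show m - k = m - (k + 1) + 1 by omega, qfact_succ]
  field_simp

lemma qbinom_succ_succ {m k : ℕ} (h : k ≤ m) :
    qbinom q (m + 1) (k + 1) = qbinom q m (k + 1) + q ^ (m - k) * qbinom q m k := by
  refine mul_left_cancel₀ (hq (k + 1) k.succ_ne_zero) ?_
  rw [qnum_mul_qbinom_succ_succ hq, mul_add, qnum_mul_qbinom_succ_right hq,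
    show m + 1 = (m - k) + (k + 1) by omega, qnum_add]
  ring

lemma sum_pow_mul_qbinom (n M : ℕ) :
    ∑ x ∈ range M, q ^ x * qbinom q x n = q ^ n * qbinom q M (n + 1) := by
  induction M with
  | zero => simp [qbinom_of_lt]
  | succ M ih =>
    rw [sum_range_succ, ih]
    rcases lt_or_ge M n with h | h
    · rw [qbinom_of_lt h, qbinom_of_lt (by omega), qbinom_of_lt (by omega)]
      ring
    · rw [qbinom_succ_succ hq h, mul_add, ← mul_assoc, ← pow_add, Nat.add_sub_cancel' h]

lemma qbinom_eq_prod (hq0 : q ≠ 0) (m n : ℕ) :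
    qbinom q m n =
      ∏ j ∈ range n, (qnum q (m + 1) - qnum q (j + 1)) / (q ^ (j + 1) * qnum q (j + 1)) := by
  induction n with
  | zero => simp [qbinom_zero_right hq]
  | succ n ih =>
    have hn := hq (n + 1) n.succ_ne_zero
    have hqn : q ^ (n + 1) ≠ 0 := pow_ne_zero _ hq0
    rw [prod_range_succ, ← ih, ← mul_div_assoc, eq_div_iff (mul_ne_zero hqn hn)]
    calc qbinom q m (n + 1) * (q ^ (n + 1) * qnum q (n + 1))
        = q ^ (n + 1) * (qnum q (m - n) * qbinom q m n) := by
          rw [← qnum_mul_qbinom_succ_right hq]; ring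
      _ = qbinom q m n * (qnum q (m + 1) - qnum q (n + 1)) := by
          rcases lt_or_ge m n with h | h
          · rw [qbinom_of_lt h]; ring
          · rw [show m + 1 = (n + 1) + (m - n) by omega, qnum_add]; ring

lemma one_div_qnum_mul_sum_qbinom (m n : ℕ) :
    1 / qnum q (m + 1) * ∑ x ∈ range (m + 1), q ^ x * qbinom q x n =
      q ^ n * qbinom q m n / qnum q (n + 1) := by
  have hm := hq (m + 1) m.succ_ne_zero
  have hn := hq (n + 1) n.succ_ne_zero
  rw [sum_pow_mul_qbinom hq, eq_div_iff hn]
  calc 1 / qnum q (m + 1) * (q ^ n * qbinom q (m + 1) (n + 1)) * qnum q (n + 1)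
      = q ^ n / qnum q (m + 1) * (qnum q (n + 1) * qbinom q (m + 1) (n + 1)) := by ring
    _ = q ^ n * qbinom q m n := by
      rw [qnum_mul_qbinom_succ_succ hq]
      field_simp

theorem tendsto_qVolkenborn_sum_qbinom [TopologicalSpace K] [IsTopologicalRing K] (hq0 : q ≠ 0)
    {ι : Type*} {l : Filter ι} {M : ι → ℕ} (hM0 : ∀ i, M i ≠ 0)
    (hM : Tendsto (fun i => qnum q (M i)) l (𝓝 0)) (n : ℕ) :
    Tendsto (fun i => 1 / qnum q (M i) * ∑ x ∈ range (M i), q ^ x * qbinom q x n) l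
      (𝓝 ((-1) ^ n * q ^ n * (q ^ (n + 1).choose 2)⁻¹ / qnum q (n + 1))) := by
  have hprod : Tendsto (fun i => q ^ n * (∏ j ∈ range n,
      (qnum q (M i) - qnum q (j + 1)) / (q ^ (j + 1) * qnum q (j + 1))) / qnum q (n + 1)) l
      (𝓝 (q ^ n * (∏ j ∈ range n,
        (0 - qnum q (j + 1)) / (q ^ (j + 1) * qnum q (j + 1))) / qnum q (n + 1))) :=
    ((tendsto_finsetProd _ fun j _ => (hM.sub_const _).div_const _).const_mul _).div_const _
  convert hprod using 2 with i
  · obtain ⟨m, hm⟩ := Nat.exists_eq_succ_of_ne_zero (hM0 i)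
    rw [hm, one_div_qnum_mul_sum_qbinom hq, qbinom_eq_prod hq hq0]
  · have hj (j : ℕ) (_ : j ∈ range n) :
        (0 - qnum q (j + 1)) / (q ^ (j + 1) * qnum q (j + 1)) = -(q ^ (j + 1))⁻¹ := by
      have := hq (j + 1) j.succ_ne_zero
      rw [zero_sub]
      field_simp
    rw [prod_congr rfl hj, prod_range_neg_inv_pow_succ]
    ring

end QAnalogues

/-- **Equation (13)** (exponent corrected): the q-Volkenborn integral of the Gaussian
binomial coefficient: the Riemann sums
`(1/[p^N]_q) Σ_{x=0}^{p^N-1} q^x binom(x,n)_q` converge in `ℚ_p` to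
`(-1)^n q^n q^{-C(n+1,2)} / [n+1]_q`. -/
theorem qVolkenborn_qbinom
    (p : ℕ) [Fact p.Prime] (q : ℤ_[p]) (hq1 : q ≠ 1)
    (hq : ‖q - 1‖ < (p : ℝ) ^ (-(1 : ℝ) / ((p : ℝ) - 1))) (n : ℕ) :
    Filter.Tendsto
      (fun N : ℕ => (1 / qnum (q : ℚ_[p]) (p ^ N)) *
        ∑ x ∈ Finset.range (p ^ N), (q : ℚ_[p]) ^ x * qbinom (q : ℚ_[p]) x n)
      Filter.atTop
      (nhds ((-1 : ℚ_[p]) ^ n * (q : ℚ_[p]) ^ n *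
        ((q : ℚ_[p]) ^ Nat.choose (n + 1) 2)⁻¹ / qnum (q : ℚ_[p]) (n + 1))) := by
  have hp := (Fact.out : p.Prime)
  have hq' := pow_pred_lt_inv_of_lt_rpow hp.one_lt (norm_nonneg _) hq
  have hnorm := PadicInt.norm_qnum hq1 hq'
  have hq0 : (q : ℚ_[p]) ≠ 0 := by
    rw [Ne, PadicInt.coe_eq_zero]
    rintro rfl
    simpa using PadicInt.norm_sub_one_lt_one hq'
  refine tendsto_qVolkenborn_sum_qbinom (fun m hm => ?_) hq0 (fun N => pow_ne_zero _ hp.ne_zero)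
    ?_ n
  · rw [← norm_ne_zero_iff, hnorm, norm_ne_zero_iff]
    exact Nat.cast_ne_zero.2 hm
  · rw [tendsto_zero_iff_norm_tendsto_zero]
    simp_rw [hnorm, Nat.cast_pow, norm_pow, Padic.norm_p]
    exact tendsto_pow_atTop_nhds_zero_of_lt_one (by positivity)
      (inv_lt_one_of_one_lt₀ (by exact_mod_cast hp.one_lt))
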